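/- Let A be the 12×24 real matrix whose twelve rows, acting on w = (w_0,…,w_23) ∈ ℝ^24, compute w_1+w_23−w_11−w_13, w_2+w_4−w_8−w_10, w_14+w_16−w_20−w_22, w_0+w_7−w_0−w_6, w_3+w_17−w_18−w_21, w_3+w_17−w_16−w_21, w_7+w_11−w_8−w_10, w_13+w_23−w_14−w_22, w_1+w_5−w_2−w_4, w_9+w_19−w_15−w_20, w_9+w_19−w_15−w_18, and w_5+w_12−w_6−w_12. Then A has full row rank 12, A𝟙 = 0 for the all-ones vector 𝟙, and for every b ∈ ℝ^12 there exists w ∈ ℝ^24 with A w = b and w_i ≥ 0 for all i. -/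
import Mathlib

set_option maxHeartbeats 1000000

/-- The length-equalization system matrix for the genus-2 (7-corner region) cutgraph pattern. -/
def Amat : Matrix (Fin 12) (Fin 24) ℝ :=
  Matrix.of ![![0,1,0,0,0,0,0,0,0,0,0,-1,0,-1,0,0,0,0,0,0,0,0,0,1],
    ![0,0,1,0,1,0,0,0,-1,0,-1,0,0,0,0,0,0,0,0,0,0,0,0,0],
    ![0,0,0,0,0,0,0,0,0,0,0,0,0,0,1,0,1,0,0,0,-1,0,-1,0],
    ![0,0,0,0,0,0,-1,1,0,0,0,0,0,0,0,0,0,0,0,0,0,0,0,0],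
    ![0,0,0,1,0,0,0,0,0,0,0,0,0,0,0,0,0,1,-1,0,0,-1,0,0],
    ![0,0,0,1,0,0,0,0,0,0,0,0,0,0,0,0,-1,1,0,0,0,-1,0,0],
    ![0,0,0,0,0,0,0,1,-1,0,-1,1,0,0,0,0,0,0,0,0,0,0,0,0],
    ![0,0,0,0,0,0,0,0,0,0,0,0,0,1,-1,0,0,0,0,0,0,0,-1,1],
    ![0,1,-1,0,-1,1,0,0,0,0,0,0,0,0,0,0,0,0,0,0,0,0,0,0],
    ![0,0,0,0,0,0,0,0,0,1,0,0,0,0,0,-1,0,0,0,1,-1,0,0,0],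
    ![0,0,0,0,0,0,0,0,0,1,0,0,0,0,0,-1,0,0,-1,1,0,0,0,0],
    ![0,0,0,0,0,1,-1,0,0,0,0,0,0,0,0,0,0,0,0,0,0,0,0,0]]

/-- A particular solution of `Amat.mulVec w = b`, shifted by `m` (a multiple of the
all-ones kernel vector). -/
noncomputable def wsol (b : Fin 12 → ℝ) (m : ℝ) : Fin 24 → ℝ :=
  ![m,
    b 1 + b 3 - b 6 + b 8 - b 11 + m,
    b 1 + m,
    b 4 + b 9 - b 10 + m,
    m,
    -b 3 + b 6 + b 11 + m,
    -b 3 + b 6 + m,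
    b 6 + m,
    m,
    b 9 + m,
    m,
    m,
    m,
    -b 0 + b 1 + b 3 - b 6 + b 8 - b 11 + m,
    (-b 0 + b 1 + b 2 + b 3 - b 4 + b 5 - b 6 - b 7 + b 8 - b 9 + b 10 - b 11) / 2 + m,
    m,
    b 4 - b 5 + b 9 - b 10 + m,
    m,
    b 9 - b 10 + m,
    m,
    m,
    m,
    (-b 0 + b 1 - b 2 + b 3 + b 4 - b 5 - b 6 - b 7 + b 8 + b 9 - b 10 - b 11) / 2 + m,
    m]

lemma finsucc12 : True := trivial

lemma bvec_eta (b : Fin 12 → ℝ) :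
    b = ![b 0, b 1, b 2, b 3, b 4, b 5, b 6, b 7, b 8, b 9, b 10, b 11] := by
  funext i; fin_cases i <;> rfl

lemma wsol_mulVec (b : Fin 12 → ℝ) (m : ℝ) : Amat.mulVec (wsol b m) = b := by
  have h : ∀ i, Amat.mulVec (wsol b m) i =
      ![b 0, b 1, b 2, b 3, b 4, b 5, b 6, b 7, b 8, b 9, b 10, b 11] i := by
    simp only [Fin.forall_fin_succ, IsEmpty.forall_iff, and_true, Matrix.mulVec,
      dotProduct, Fin.sum_univ_succ, Finset.univ_eq_empty, Finset.sum_empty,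
      Amat, wsol, Matrix.of_apply, Matrix.cons_val_zero, Matrix.cons_val_succ]
    refine ⟨?_, ?_, ?_, ?_, ?_, ?_, ?_, ?_, ?_, ?_, ?_, ?_⟩ <;> ring
  rw [bvec_eta b]; funext i; exact h i

/-- The matrix has full row rank 12, the all-ones vector lies in its kernel, and
the system `A w = b` has a non-negative solution for every right-hand side `b`. -/
theorem equalizable :
    Amat.rank = 12 ∧ Amat.mulVec (fun _ => 1) = 0 ∧
    ∀ b : Fin 12 → ℝ, ∃ w : Fin 24 → ℝ, Amat.mulVec w = b ∧ ∀ i, 0 ≤ w i := by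
  refine ⟨?_, ?_, ?_⟩
  · -- full row rank, via surjectivity of mulVec
    have hsurj : Function.Surjective Amat.mulVecLin := by
      intro b
      exact ⟨wsol b 0, by simpa using wsol_mulVec b 0⟩
    rw [Matrix.rank, LinearMap.range_eq_top.mpr hsurj, finrank_top]
    simp
  · have h : ∀ i, Amat.mulVec (fun _ => (1:ℝ)) i = (0 : Fin 12 → ℝ) i := by
      simp only [Fin.forall_fin_succ, IsEmpty.forall_iff, and_true, Matrix.mulVec,
        dotProduct, Fin.sum_univ_succ, Finset.univ_eq_empty, Finset.sum_empty,
        Amat, Matrix.of_apply, Matrix.cons_val_zero, Matrix.cons_val_succ, Pi.zero_apply]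
      norm_num
    funext i; exact h i
  · intro b
    set M : ℝ := |b 0| + |b 1| + |b 2| + |b 3| + |b 4| + |b 5| + |b 6| + |b 7| +
        |b 8| + |b 9| + |b 10| + |b 11| with hM
    refine ⟨wsol b M, wsol_mulVec b M, ?_⟩
    have habs : ∀ j : Fin 12, -|b j| ≤ b j ∧ b j ≤ |b j| :=
      fun j => ⟨neg_abs_le _, le_abs_self _⟩
    simp only [Fin.forall_fin_succ, IsEmpty.forall_iff, and_true, wsol,
      Matrix.cons_val_zero, Matrix.cons_val_succ,
      show Fin.succ (0 : Fin 12) = 1 from rfl,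
      show Fin.succ (1 : Fin 12) = 2 from rfl,
      show Fin.succ (2 : Fin 12) = 3 from rfl,
      show Fin.succ (3 : Fin 12) = 4 from rfl,
      show Fin.succ (4 : Fin 12) = 5 from rfl,
      show Fin.succ (5 : Fin 12) = 6 from rfl,
      show Fin.succ (6 : Fin 12) = 7 from rfl,
      show Fin.succ (7 : Fin 12) = 8 from rfl,
      show Fin.succ (8 : Fin 12) = 9 from rfl,
      show Fin.succ (9 : Fin 12) = 10 from rfl,
      show Fin.succ (10 : Fin 12) = 11 from rfl]
    refine ⟨?_, ?_, ?_, ?_, ?_, ?_, ?_, ?_, ?_, ?_, ?_, ?_, ?_, ?_, ?_, ?_, ?_, ?_, ?_, ?_,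
      ?_, ?_, ?_, ?_⟩ <;>
      · rw [hM]
        linarith [habs 0, habs 1, habs 2, habs 3, habs 4, habs 5, habs 6, habs 7,
          habs 8, habs 9, habs 10, habs 11]
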